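/- arXiv:2402.03205 — 2 statements merged into one kernel-verified Lean document; each statement's English description precedes it below -/
import Mathlib

section
/- For the 4×4 matrix B = (1/√3)·[[1,1,1,0],[1,-1,-1,0],[1,-1,1,0],[1,1,-1,0]], every x ∈ {-1,1}⁴ satisfies ‖Bx‖_∞ = √3, hence β(B) = √3; moreover B maps ℝ⁴ into a 3-dimensional subspace (its fourth column is zero). -/
open Matrix Finset

/-- The ±1 vector associated to a Boolean sign pattern. -/
noncomputable def signVec {n : ℕ} (σ : Fin n → Bool) : Fin n → ℝ :=
  fun i => if σ i then 1 else -1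

/-- The ℓ^∞ norm (maximum absolute coordinate) of a vector. -/
noncomputable def supNorm {n : ℕ} (v : Fin n → ℝ) : ℝ := ⨆ i, |v i|

/-- β(A) = 2^{-n} Σ_{x ∈ {-1,1}^n} ‖Ax‖_∞. -/
noncomputable def beta {n : ℕ} (A : Matrix (Fin n) (Fin n) ℝ) : ℝ :=
  (2 ^ n : ℝ)⁻¹ * ∑ σ : Fin n → Bool, supNorm (A.mulVec (signVec σ))

noncomputable def B4 : Matrix (Fin 4) (Fin 4) ℝ :=
  (Real.sqrt 3)⁻¹ • !![1, 1, 1, 0; 1, -1, -1, 0; 1, -1, 1, 0; 1, 1, -1, 0]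

/-!
Each row of `√3 • B4` applied to `x = (a, b, c, d)` is `a ± b ± c`, with all four sign choices
occurring. These are at most `3` in absolute value, and the choice of signs matching those of
`b / a` and `c / a` gives `3a`, so every `‖B4 x‖_∞` equals `3 / √3 = √3`; averaging gives `β`.
-/

theorem supNorm_eq_norm {n : ℕ} (v : Fin n → ℝ) : supNorm v = ‖v‖ := by
  rw [supNorm, Pi.norm_def, Finset.sup_univ_eq_ciSup, NNReal.coe_iSup]
  rfl

theorem beta_eq_of_forall_supNorm_eq {n : ℕ} {A : Matrix (Fin n) (Fin n) ℝ} {c : ℝ}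
    (h : ∀ σ, supNorm (A *ᵥ signVec σ) = c) : beta A = c := by
  simp only [beta, h, sum_const, card_univ, Fintype.card_fun, Fintype.card_bool,
    Fintype.card_fin, nsmul_eq_mul, Nat.cast_pow, Nat.cast_ofNat]
  field_simp

theorem signVec_eq_one_or_neg_one {n : ℕ} (σ : Fin n → Bool) (i : Fin n) :
    signVec σ i = 1 ∨ signVec σ i = -1 := by
  unfold signVec
  split_ifs <;> simp

theorem norm_signCombinations {a b c : ℝ} (ha : a = 1 ∨ a = -1) (hb : b = 1 ∨ b = -1)
    (hc : c = 1 ∨ c = -1) : ‖![a + b + c, a - b - c, a - b + c, a + b - c]‖ = 3 := by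
  have hattained : ∃ j, |![a + b + c, a - b - c, a - b + c, a + b - c] j| = 3 := by
    have : |a + b + c| = 3 ∨ |a - b - c| = 3 ∨ |a - b + c| = 3 ∨ |a + b - c| = 3 := by
      rcases ha with rfl | rfl <;> rcases hb with rfl | rfl <;> rcases hc with rfl | rfl <;>
        norm_num
    rcases this with h | h | h | h
    exacts [⟨0, h⟩, ⟨1, h⟩, ⟨2, h⟩, ⟨3, h⟩]
  have hbounds : ∀ x : ℝ, x = 1 ∨ x = -1 → -1 ≤ x ∧ x ≤ 1 := by
    rintro x (rfl | rfl) <;> norm_num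
  obtain ⟨ha₁, ha₂⟩ := hbounds a ha
  obtain ⟨hb₁, hb₂⟩ := hbounds b hb
  obtain ⟨hc₁, hc₂⟩ := hbounds c hc
  obtain ⟨j, hj⟩ := hattained
  refine le_antisymm ((pi_norm_le_iff_of_nonneg (by norm_num)).2 fun i => ?_) ?_
  · rw [Real.norm_eq_abs, abs_le]
    fin_cases i <;>
      simp only [Fin.zero_eta, Fin.mk_one, Fin.reduceFinMk, Fin.isValue, cons_val_zero,
        cons_val_one, Matrix.cons_val] <;>
      constructor <;> linarith
  · rw [← hj, ← Real.norm_eq_abs]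
    exact norm_le_pi_norm _ j

theorem B4_mulVec (x : Fin 4 → ℝ) :
    B4 *ᵥ x = (Real.sqrt 3)⁻¹ •
      ![x 0 + x 1 + x 2, x 0 - x 1 - x 2, x 0 - x 1 + x 2, x 0 + x 1 - x 2] := by
  ext i
  fin_cases i <;>
    simp only [B4, mulVec, dotProduct, Fin.zero_eta, Fin.mk_one, Fin.reduceFinMk, Fin.isValue,
      Matrix.smul_apply, of_apply, cons_val', cons_val_zero, cons_val_one, Matrix.cons_val,
      cons_val_fin_one, smul_eq_mul, Fin.sum_univ_four, Pi.smul_apply] <;>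
    ring

theorem supNorm_B4_mulVec_signVec (σ : Fin 4 → Bool) :
    supNorm (B4 *ᵥ signVec σ) = Real.sqrt 3 := by
  have hsign := signVec_eq_one_or_neg_one σ
  rw [supNorm_eq_norm, B4_mulVec, norm_smul, norm_signCombinations (hsign 0) (hsign 1) (hsign 2),
    norm_inv, Real.norm_of_nonneg (Real.sqrt_nonneg 3)]
  field_simp
  rw [Real.sq_sqrt (by norm_num)]

theorem B4_apply_three (i : Fin 4) : B4 i 3 = 0 := by
  fin_cases i <;> simp [B4]

theorem bad_science_n4_degenerate :
    (∀ σ : Fin 4 → Bool, supNorm (B4.mulVec (signVec σ)) = Real.sqrt 3) ∧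
    beta B4 = Real.sqrt 3 ∧
    (∀ i, B4 i 3 = 0) :=
  ⟨supNorm_B4_mulVec_signVec, beta_eq_of_forall_supNorm_eq supNorm_B4_mulVec_signVec,
    B4_apply_three⟩
end

section
/- Define matrices A_n ∈ ℝ^{2^n × 2^n} recursively by A_0 = (1) and A_{n+1} = [[A_n, Id_{2^n}],[A_n, -Id_{2^n}]] (block form). Then for every n ≥ 0 and every x ∈ {-1,1}^{2^n}, ‖A_n x‖_∞ = n+1. -/
open Matrix Finset

/-- The recursively defined Haar-type matrices: A₀ = (1),
A_{n+1} = [[Aₙ, Id],[Aₙ, -Id]]. -/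
noncomputable def haarA : (n : ℕ) → Matrix (Fin (2 ^ n)) (Fin (2 ^ n)) ℝ
  | 0 => 1
  | n + 1 =>
      Matrix.reindex (finSumFinEquiv.trans (finCongr (by rw [pow_succ, mul_two])))
        (finSumFinEquiv.trans (finCongr (by rw [pow_succ, mul_two])))
        (Matrix.fromBlocks (haarA n) 1 (haarA n) (-1))

/-! Writing x = (y, z) in block form, A_{n+1} x = (A_n y + z, A_n y - z). Since
`max |a + b| |a - b| = |a| + |b|` and every `|z i| = 1`, the largest coordinate of A_{n+1} x in
absolute value is one more than that of A_n y. -/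

theorem max_abs_add_abs_sub {α : Type*} [AddCommGroup α] [LinearOrder α] [IsOrderedAddMonoid α]
    (a b : α) : max |a + b| |a - b| = |a| + |b| := by
  simp only [abs_eq_max_neg, neg_add, neg_sub]
  grind

section

variable {n : ℕ}

theorem abs_signVec (σ : Fin n → Bool) (i : Fin n) : |signVec σ i| = 1 := by
  unfold signVec
  split <;> simp

theorem abs_le_supNorm (v : Fin n → ℝ) (i : Fin n) : |v i| ≤ supNorm v :=
  le_ciSup (f := fun i => |v i|) (Set.finite_range _).bddAbove i

theorem exists_abs_eq_supNorm [NeZero n] (v : Fin n → ℝ) : ∃ i, |v i| = supNorm v :=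
  exists_eq_ciSup_of_finite

theorem supNorm_eq_of_abs_eq {v : Fin n → ℝ} {c : ℝ} (hle : ∀ i, |v i| ≤ c)
    (hex : ∃ i, |v i| = c) : supNorm v = c :=
  let ⟨i, hi⟩ := hex
  have : Nonempty (Fin n) := ⟨i⟩
  le_antisymm (ciSup_le hle) (hi ▸ abs_le_supNorm v i)

end

def haarIndex (n : ℕ) : Fin (2 ^ n) ⊕ Fin (2 ^ n) ≃ Fin (2 ^ (n + 1)) :=
  finSumFinEquiv.trans (finCongr (by rw [pow_succ, mul_two]))

theorem haarA_succ_mulVec (n : ℕ) (v : Fin (2 ^ (n + 1)) → ℝ) :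
    haarA (n + 1) *ᵥ v =
      (fromBlocks (haarA n) 1 (haarA n) (-1) *ᵥ (v ∘ haarIndex n)) ∘ (haarIndex n).symm := by
  rw [haarA, reindex_apply, submatrix_mulVec_equiv]
  rfl

theorem haarA_succ_mulVec_inl (n : ℕ) (v : Fin (2 ^ (n + 1)) → ℝ) (i : Fin (2 ^ n)) :
    (haarA (n + 1) *ᵥ v) (haarIndex n (.inl i)) =
      (haarA n *ᵥ (v ∘ haarIndex n ∘ .inl)) i + v (haarIndex n (.inr i)) := by
  simp only [haarA_succ_mulVec, fromBlocks_mulVec, Function.comp_apply, Equiv.symm_apply_apply,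
    Sum.elim_inl, Pi.add_apply, one_mulVec]
  rfl

theorem haarA_succ_mulVec_inr (n : ℕ) (v : Fin (2 ^ (n + 1)) → ℝ) (i : Fin (2 ^ n)) :
    (haarA (n + 1) *ᵥ v) (haarIndex n (.inr i)) =
      (haarA n *ᵥ (v ∘ haarIndex n ∘ .inl)) i - v (haarIndex n (.inr i)) := by
  simp only [haarA_succ_mulVec, fromBlocks_mulVec, Function.comp_apply, Equiv.symm_apply_apply,
    Sum.elim_inr, neg_mulVec, one_mulVec, ← sub_eq_add_neg]
  rfl

theorem supNorm_haarA_mulVec (n : ℕ) {v : Fin (2 ^ n) → ℝ} (hv : ∀ i, |v i| = 1) :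
    supNorm (haarA n *ᵥ v) = n + 1 := by
  induction n with
  | zero =>
    rw [haarA, one_mulVec, Nat.cast_zero, zero_add]
    exact supNorm_eq_of_abs_eq (fun i => (hv i).le) ⟨0, hv 0⟩
  | succ n ih =>
    set e := haarIndex n
    set a := haarA n *ᵥ (v ∘ e ∘ .inl)
    have ha : supNorm a = n + 1 := ih fun i => hv _
    have hinl (i) : (haarA (n + 1) *ᵥ v) (e (.inl i)) = a i + v (e (.inr i)) :=
      haarA_succ_mulVec_inl n v i
    have hinr (i) : (haarA (n + 1) *ᵥ v) (e (.inr i)) = a i - v (e (.inr i)) :=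
      haarA_succ_mulVec_inr n v i
    have hsplit (i) : max |a i + v (e (.inr i))| |a i - v (e (.inr i))| = |a i| + 1 := by
      rw [max_abs_add_abs_sub, hv]
    rw [Nat.cast_succ]
    refine supNorm_eq_of_abs_eq ?bound ?attained
    case bound =>
      intro k
      obtain ⟨i | i, rfl⟩ := e.surjective k
      · rw [hinl]
        linarith [le_max_left _ _ |>.trans (hsplit i).le, abs_le_supNorm a i]
      · rw [hinr]
        linarith [le_max_right _ _ |>.trans (hsplit i).le, abs_le_supNorm a i]
    case attained =>
      obtain ⟨j, hj⟩ := exists_abs_eq_supNorm a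
      rcases max_choice |a j + v (e (.inr j))| |a j - v (e (.inr j))| with h | h
      · exact ⟨e (.inl j), by rw [hinl, ← h, hsplit, hj, ha]⟩
      · exact ⟨e (.inr j), by rw [hinr, ← h, hsplit, hj, ha]⟩

theorem haarA_supNorm (n : ℕ) (σ : Fin (2 ^ n) → Bool) :
    supNorm ((haarA n).mulVec (signVec σ)) = n + 1 :=
  supNorm_haarA_mulVec n (abs_signVec σ)
end
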